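/- Let (X,d) be an ultra-metric space, fix x₀ ∈ X, and extend d to X̄ = X ∪ X⁻¹ ∪ {e} by setting d(x,e) = max{d(x,x₀), 1} for x ∈ X, d(x⁻¹,y⁻¹) = d(x,y) and d(x⁻¹,y) = d(x,y⁻¹) = max{d(x,e), d(y,e)} for all x,y ∈ X ∪ {e}. Let δ_u be the associated Graev ultra-metric on F(X) and let 0 < ε < 1 and E = {(x,y) ∈ X × X : d(x,y) < ε}. Then [Ẽ] ⊆ B_{δ_u}(e,ε); in particular, if d(x,y) < ε then δ_u(x⁻¹y, e) = d(x,y) < ε. -/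

import Mathlib

/-! Graev ultra-metrics on free groups (after Gao, Savchenko–Zarichnyi and
Shlossberg, "On Graev type ultra-metrics"). -/

namespace GraevStmt

variable {X : Type*}

/-- The alphabet `X̄ = X ∪ X⁻¹ ∪ {e}`: `none` is the letter `e`,
`some (x, true)` is the letter `x` and `some (x, false)` is the letter `x⁻¹`. -/
abbrev Letter (X : Type*) := Option (X × Bool)

/-- The letter `e`. -/
def eL : Letter X := none

/-- The letter `x`, for `x ∈ X`. -/
def pos (x : X) : Letter X := some (x, true)

/-- The letter `x⁻¹`, for `x ∈ X`. -/
def neg (x : X) : Letter X := some (x, false)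

/-- The formal inverse of a letter; `e⁻¹ = e` and `(x⁻¹)⁻¹ = x`. -/
def linv : Letter X → Letter X
  | none => none
  | some (x, b) => some (x, !b)

/-- Interpretation of a letter as an element of the free group `F(X)`. -/
def toF : Letter X → FreeGroup X
  | none => 1
  | some (x, b) => FreeGroup.mk [(x, b)]

/-- The reduced word of a word `w ∈ W(X)` over the alphabet `X̄`, viewed as the
corresponding element of the free group `F(X)`. -/
def red (w : List (Letter X)) : FreeGroup X := (w.map toF).prod

/-- The canonical irreducible word over the alphabet `X̄` representing a given
element of the free group `F(X)`. -/
def wordOf [DecidableEq X] (w : FreeGroup X) : List (Letter X) :=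
  w.toWord.map some

/-- `ρ_u(w, v)`: the maximum of the distances between corresponding letters of
two words of equal length. -/
def rho (d : Letter X → Letter X → ℝ) (w v : List (Letter X)) : ℝ :=
  (List.zipWith d w v).foldr max 0

/-- The Graev ultra-metric `δ_u` on `F(X)` associated with `d`:
`δ_u(w, v) = inf {ρ_u(w*, v*) : lh(w*) = lh(v*), (w*)' = w, (v*)' = v}`. -/
noncomputable def graev (d : Letter X → Letter X → ℝ) (w v : FreeGroup X) : ℝ :=
  sInf {r : ℝ | ∃ w' v' : List (Letter X), w'.length = v'.length ∧
    red w' = w ∧ red v' = v ∧ r = rho d w' v'}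

/-- `d` is an ultra-metric: symmetric, vanishing exactly on the diagonal and
satisfying the strong triangle inequality. -/
def IsUltraMetric {A : Type*} (d : A → A → ℝ) : Prop :=
  (∀ a b, d a b = d b a) ∧ (∀ a b, d a b = 0 ↔ a = b) ∧
    ∀ a b c, d a c ≤ max (d a b) (d b c)

/-- An admissible ultra-metric on the alphabet `X̄`, i.e. an ultra-metric with
`d(x⁻¹, y⁻¹) = d(x, y)`, `d(x, e) = d(x⁻¹, e)` and `d(x⁻¹, y) = d(x, y⁻¹)`. -/
def IsAdmissible (d : Letter X → Letter X → ℝ) : Prop :=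
  IsUltraMetric d ∧ (∀ x y : X, d (neg x) (neg y) = d (pos x) (pos y)) ∧
    (∀ x : X, d (pos x) eL = d (neg x) eL) ∧
    ∀ x y : X, d (neg x) (pos y) = d (pos x) (neg y)

/-- A function `R` on `F(X) × F(X)` is (two-sided) invariant if
`R(uwv, uw'v) = R(w, w')` for all `u, v, w, w'`. -/
def IsInvariant (R : FreeGroup X → FreeGroup X → ℝ) : Prop :=
  ∀ u v w w' : FreeGroup X, R (u * w * v) (u * w' * v) = R w w'

/-- A match on `{0, …, n-1}`: an involution `θ` such that there are no
`i < j < θ(i) < θ(j)`. -/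
def IsMatch {n : ℕ} (θ : Fin n → Fin n) : Prop :=
  (∀ i, θ (θ i) = i) ∧ ∀ i j : Fin n, ¬(i < j ∧ j < θ i ∧ θ i < θ j)

/-- The word `w^θ` associated with a word `w` and a match `θ`:
its `i`-th letter is `x_i` if `θ(i) > i`, `e` if `θ(i) = i`, and
`x_{θ(i)}⁻¹` if `θ(i) < i`. -/
def matchWord (w : List (Letter X)) (θ : Fin w.length → Fin w.length) :
    List (Letter X) :=
  List.ofFn fun i => if i < θ i then w.get i
    else if θ i = i then eL else linv (w.get (θ i))

/-- `j₂(x, y) = x⁻¹y`. -/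
def j2 (p : X × X) : FreeGroup X := (FreeGroup.of p.1)⁻¹ * FreeGroup.of p.2

/-- `j₂*(x, y) = xy⁻¹`. -/
def j2s (p : X × X) : FreeGroup X := FreeGroup.of p.1 * (FreeGroup.of p.2)⁻¹

/-- `ε̃ = ⋃_{w ∈ F(X)} w (j₂(ε) ∪ j₂*(ε)) w⁻¹` for `ε ⊆ X × X`. -/
def tilde (S : Set (X × X)) : Set (FreeGroup X) :=
  ⋃ w : FreeGroup X, (fun g => w * g * w⁻¹) '' (j2 '' S ∪ j2s '' S)

/-- The extension of an ultra-metric `d` on `X` to the alphabet `X̄` determined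
by a base point `x₀`: `d(x, e) = max {d(x, x₀), 1}`, `d(x⁻¹, y⁻¹) = d(x, y)`
and `d(x⁻¹, y) = d(x, y⁻¹) = max {d(x, e), d(y, e)}` for `x, y ∈ X ∪ {e}`. -/
def ext (d : X → X → ℝ) (x₀ : X) : Letter X → Letter X → ℝ
  | none, none => 0
  | some (x, _), none => max (d x x₀) 1
  | none, some (y, _) => max (d y x₀) 1
  | some (x, true), some (y, true) => d x y
  | some (x, false), some (y, false) => d x y
  | some (x, _), some (y, _) => max (max (d x x₀) 1) (max (d y x₀) 1)

/-- The extension of an ultra-metric `d` of diameter at most `1` on `X` to the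
alphabet `X̄`, with `d(x⁻¹, y⁻¹) = d(x, y)` and
`d(x⁻¹, y) = d(x, y⁻¹) = d(x, e) = d(x⁻¹, e) = 1`. -/
def extOne (d : X → X → ℝ) : Letter X → Letter X → ℝ
  | none, none => 0
  | some (x, true), some (y, true) => d x y
  | some (x, false), some (y, false) => d x y
  | _, _ => 1

/-- The homomorphism `α : F(X) → ℤ` extending the constant map `X → {1} ⊆ ℤ`. -/
def alpha (w : FreeGroup X) : ℤ :=
  Multiplicative.toAdd ((FreeGroup.lift fun _ : X => Multiplicative.ofAdd (1 : ℤ)) w)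

/-- `F(q_r) : F(X) → F(X/F_r)`, where `X/F_r` is the quotient of `X` by the
partition into open balls of radius `r` (for an ultra-metric the relation
`d x y < r` is an equivalence relation, so `Quot` of this relation is exactly
this quotient) and `q_r` is the quotient map. -/
def Fq (d : X → X → ℝ) (r : ℝ) :
    FreeGroup X →* FreeGroup (Quot fun x y : X => d x y < r) :=
  FreeGroup.map (Quot.mk _)

/-- The Savchenko–Zarichnyi function `d̂` on `F(X) × F(X)`:
`d̂(v, w) = 1` if `α(v) ≠ α(w)`, and
`d̂(v, w) = inf {r > 0 : F(q_r)(v) = F(q_r)(w)}` if `α(v) = α(w)`. -/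
noncomputable def dHat (d : X → X → ℝ) (v w : FreeGroup X) : ℝ :=
  if alpha v = alpha w then sInf {r : ℝ | 0 < r ∧ Fq d r v = Fq d r w} else 1


section AuxProof

lemma toF_pos (x : X) : toF (pos x) = FreeGroup.of x := rfl

lemma toF_neg (x : X) : toF (neg x) = (FreeGroup.of x)⁻¹ := by
  show FreeGroup.mk [(x, false)] = (FreeGroup.mk [(x, true)])⁻¹
  rw [FreeGroup.inv_mk]; rfl

lemma toF_linv (a : Letter X) : toF (linv a) = (toF a)⁻¹ := by
  rcases a with _ | ⟨x, b⟩
  · simp [toF, linv]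
  · show FreeGroup.mk [(x, !b)] = (FreeGroup.mk [(x, b)])⁻¹
    rw [FreeGroup.inv_mk]; cases b <;> rfl

lemma red_nil : red ([] : List (Letter X)) = 1 := rfl

lemma red_cons (a : Letter X) (t : List (Letter X)) :
    red (a :: t) = toF a * red t := by simp [red]

lemma red_append (w v : List (Letter X)) : red (w ++ v) = red w * red v := by
  simp [red]

lemma red_invWord (w : List (Letter X)) :
    red ((w.map linv).reverse) = (red w)⁻¹ := by
  induction w with
  | nil => simp [red]
  | cons a t ih =>
      simp only [List.map_cons, List.reverse_cons, red_append, red_cons, ih,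
        toF_linv, red_nil, mul_one, mul_inv_rev]

lemma red_map_some (L : List (X × Bool)) : red (L.map some) = FreeGroup.mk L := by
  induction L with
  | nil => rfl
  | cons a t ih =>
      rw [List.map_cons, red_cons, ih]
      show FreeGroup.mk [a] * FreeGroup.mk t = _
      rw [FreeGroup.mul_mk]; rfl

lemma map_red {Y : Type*} (f : X → Y) (w : List (Letter X)) :
    FreeGroup.map f (red w) = red (w.map (Option.map (Prod.map f id))) := by
  induction w with
  | nil => simp [red]
  | cons a t ih =>
      rw [red_cons, map_mul, ih, List.map_cons, red_cons]
      congr 1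
      rcases a with _ | ⟨x, b⟩
      · simp [toF]
      · show FreeGroup.map f (FreeGroup.mk [(x, b)]) = _
        rw [FreeGroup.map.mk]; rfl

lemma foldr_max_nonneg (l : List ℝ) : 0 ≤ l.foldr max 0 := by
  induction l with
  | nil => exact le_refl 0
  | cons a t ih => exact le_max_of_le_right ih

lemma foldr_max_lt {ε : ℝ} (hε : 0 < ε) (l : List ℝ) (h : ∀ x ∈ l, x < ε) :
    l.foldr max 0 < ε := by
  induction l with
  | nil => exact hε
  | cons a t ih =>
      exact max_lt (h a (List.mem_cons_self))
        (ih fun x hx => h x (List.mem_cons_of_mem _ hx))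

lemma le_foldr_max {x : ℝ} (l : List ℝ) (hx : x ∈ l) : x ≤ l.foldr max 0 := by
  induction l with
  | nil => cases hx
  | cons a t ih =>
      rcases List.mem_cons.1 hx with rfl | h
      · exact le_max_left _ _
      · exact le_max_of_le_right (ih h)

lemma d_nonneg {A : Type*} {d : A → A → ℝ} (hd : IsUltraMetric d) (a b : A) :
    0 ≤ d a b := by
  have h0 : d a a = 0 := (hd.2.1 a a).2 rfl
  have h := hd.2.2 a b a
  rw [h0, hd.1 b a, max_self] at h
  linarith

lemma ext_self {d : X → X → ℝ} (hd : IsUltraMetric d) (x₀ : X) (a : Letter X) :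
    ext d x₀ a a = 0 := by
  rcases a with _ | ⟨x, b⟩
  · rfl
  · cases b <;> exact (hd.2.1 x x).2 rfl

lemma ext_linv (d : X → X → ℝ) (x₀ : X) (a b : Letter X) :
    ext d x₀ (linv a) (linv b) = ext d x₀ a b := by
  rcases a with _ | ⟨x, b1⟩
  · rcases b with _ | ⟨y, b2⟩
    · rfl
    · cases b2 <;> rfl
  · rcases b with _ | ⟨y, b2⟩
    · cases b1 <;> rfl
    · cases b1 <;> cases b2 <;> rfl

end AuxProof

/-- The inclusion `[Ẽ] ⊆ B_{δ_u}(e, ε)` from the proof of Theorem `metgr`;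
in particular, if `d(x, y) < ε` then `δ_u(x⁻¹y, e) = d(x, y) < ε`. -/
theorem closure_tilde_subset_ball {X : Type*} [Nonempty X]
    (d : X → X → ℝ) (hd : IsUltraMetric d) (x₀ : X)
    (ε : ℝ) (hε0 : 0 < ε) (hε1 : ε < 1) :
    ((Subgroup.closure (tilde {p : X × X | d p.1 p.2 < ε}) :
        Subgroup (FreeGroup X)) : Set (FreeGroup X)) ⊆
      {w : FreeGroup X | graev (ext d x₀) w 1 < ε} ∧
    ∀ x y : X, d x y < ε →
      graev (ext d x₀) ((FreeGroup.of x)⁻¹ * FreeGroup.of y) 1 = d x y ∧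
      graev (ext d x₀) ((FreeGroup.of x)⁻¹ * FreeGroup.of y) 1 < ε := by
  classical
  set d' : Letter X → Letter X → ℝ := ext d x₀ with hd'def
  set E : Set (X × X) := {p : X × X | d p.1 p.2 < ε} with hEdef
  -- the defining set of `graev d' w v` and its lower bound
  have hBdd : ∀ w v : FreeGroup X,
      BddBelow {r : ℝ | ∃ w' v' : List (Letter X), w'.length = v'.length ∧
        red w' = w ∧ red v' = v ∧ r = rho d' w' v'} := by
    intro w v
    refine ⟨0, ?_⟩
    rintro r ⟨w', v', -, -, -, rfl⟩
    exact foldr_max_nonneg _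
  have hself : ∀ a : Letter X, d' a a = 0 := ext_self hd x₀
  -- Part 1 via explicit witnesses
  have key : ∀ w : FreeGroup X,
      (∃ w' v' : List (Letter X), w'.length = v'.length ∧ red w' = w ∧ red v' = 1 ∧
        ∀ z ∈ List.zipWith d' w' v', z < ε) → graev d' w 1 < ε := by
    rintro w ⟨w', v', hlen, hw, hv, hz⟩
    have hmem : rho d' w' v' ∈ {r : ℝ | ∃ w' v' : List (Letter X),
        w'.length = v'.length ∧ red w' = w ∧ red v' = 1 ∧ r = rho d' w' v'} :=
      ⟨w', v', hlen, hw, hv, rfl⟩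
    exact lt_of_le_of_lt (csInf_le (hBdd w 1) hmem) (foldr_max_lt hε0 _ hz)
  have P1 : ∀ w : FreeGroup X, w ∈ Subgroup.closure (tilde E) →
      ∃ w' v' : List (Letter X), w'.length = v'.length ∧ red w' = w ∧ red v' = 1 ∧
        ∀ z ∈ List.zipWith d' w' v', z < ε := by
    intro w hw
    refine Subgroup.closure_induction (k := tilde E)
      (p := fun g _ => ∃ w' v' : List (Letter X), w'.length = v'.length ∧
        red w' = g ∧ red v' = 1 ∧ ∀ z ∈ List.zipWith d' w' v', z < ε)
      ?_ ?_ ?_ ?_ hw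
    · -- generators
      rintro g hg
      rw [tilde, Set.mem_iUnion] at hg
      obtain ⟨u, hu⟩ := hg
      obtain ⟨t, ht, rfl⟩ := hu
      -- the words for `u` and `u⁻¹`
      set Lu : List (Letter X) := u.toWord.map some with hLu
      have hredLu : red Lu = u := by rw [hLu, red_map_some, FreeGroup.mk_toWord]
      set Lu' : List (Letter X) := (Lu.map linv).reverse with hLu'
      have hredLu' : red Lu' = u⁻¹ := by rw [hLu', red_invWord, hredLu]
      have hlen' : Lu.length = Lu'.length := by simp [hLu']
      -- get the pair (x, y) and the middle words
      have hmid : ∃ a b : Letter X, red [a, b] = t ∧ ∃ c : Letter X,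
          red [a, c] = 1 ∧ d' a a = 0 ∧ d' b c < ε := by
        rcases ht with ⟨p, hp, rfl⟩ | ⟨p, hp, rfl⟩
        · refine ⟨neg p.1, pos p.2, ?_, pos p.1, ?_, hself _, ?_⟩
          · simp [red_cons, red_nil, toF_pos, toF_neg, j2]
          · simp [red_cons, red_nil, toF_pos, toF_neg]
          · show d p.2 p.1 < ε
            rw [hd.1]; exact hp
        · refine ⟨pos p.1, neg p.2, ?_, neg p.1, ?_, hself _, ?_⟩
          · simp [red_cons, red_nil, toF_pos, toF_neg, j2s]
          · simp [red_cons, red_nil, toF_pos, toF_neg]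
          · show d p.2 p.1 < ε
            rw [hd.1]; exact hp
      obtain ⟨a, b, hab, c, hac, haa, hbc⟩ := hmid
      refine ⟨Lu ++ [a, b] ++ Lu', Lu ++ [a, c] ++ Lu', by simp [hlen'], ?_, ?_, ?_⟩
      · rw [red_append, red_append, hredLu, hredLu', hab]
      · rw [red_append, red_append, hredLu, hredLu', hac, mul_one, mul_inv_cancel]
      · intro z hz
        rw [List.zipWith_append (h := by simp), List.zipWith_append (h := rfl)]
          at hz
        rcases List.mem_append.1 hz with hz | hz
        · rcases List.mem_append.1 hz with hz | hz
          · rw [List.zipWith_self] at hz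
            obtain ⟨l, -, rfl⟩ := List.mem_map.1 hz
            rw [hself l]; exact hε0
          · have heq : List.zipWith d' [a, b] [a, c] = [d' a a, d' b c] := rfl
            rw [heq] at hz
            rcases List.mem_cons.1 hz with rfl | hz
            · rw [haa]; exact hε0
            rcases List.mem_cons.1 hz with rfl | hz
            · exact hbc
            · cases hz
        · rw [List.zipWith_self] at hz
          obtain ⟨l, -, rfl⟩ := List.mem_map.1 hz
          rw [hself l]; exact hε0
    · exact ⟨[], [], rfl, rfl, rfl, by simp⟩
    · rintro g h - - ⟨w1, v1, hl1, hw1, hv1, hz1⟩ ⟨w2, v2, hl2, hw2, hv2, hz2⟩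
      refine ⟨w1 ++ w2, v1 ++ v2, by simp [hl1, hl2], ?_, ?_, ?_⟩
      · rw [red_append, hw1, hw2]
      · rw [red_append, hv1, hv2, one_mul]
      · intro z hz
        rw [List.zipWith_append hl1] at hz
        rcases List.mem_append.1 hz with hz | hz
        · exact hz1 z hz
        · exact hz2 z hz
    · rintro g - ⟨w', v', hlen, hw, hv, hz0⟩
      refine ⟨(w'.map linv).reverse, (v'.map linv).reverse, by simp [hlen], ?_, ?_, ?_⟩
      · rw [red_invWord, hw]
      · rw [red_invWord, hv, inv_one]
      · intro z hz
        rw [← List.reverse_zipWith (by simp [hlen])] at hz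
        rw [List.mem_reverse, List.zipWith_map] at hz
        have hfun : (fun a b => d' (linv a) (linv b)) = d' := by
          funext a b; exact ext_linv d x₀ a b
        rw [hfun] at hz
        exact hz0 z hz
  constructor
  · intro w hw
    exact key w (P1 w hw)
  · intro x y hxy
    have hwit : d x y ∈ {r : ℝ | ∃ w' v' : List (Letter X), w'.length = v'.length ∧
        red w' = (FreeGroup.of x)⁻¹ * FreeGroup.of y ∧ red v' = 1 ∧ r = rho d' w' v'} := by
      refine ⟨[neg x, pos y], [neg x, pos x], rfl, ?_, ?_, ?_⟩
      · simp [red_cons, red_nil, toF_pos, toF_neg]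
      · simp [red_cons, red_nil, toF_pos, toF_neg]
      · show d x y = max (d' (neg x) (neg x)) (max (d' (pos y) (pos x)) 0)
        rw [hself]
        show d x y = max 0 (max (d y x) 0)
        rw [hd.1 y x, max_eq_left (d_nonneg hd x y), max_eq_right (d_nonneg hd x y)]
    have hub : graev d' ((FreeGroup.of x)⁻¹ * FreeGroup.of y) 1 ≤ d x y :=
      csInf_le (hBdd _ _) hwit
    have hlb : d x y ≤ graev d' ((FreeGroup.of x)⁻¹ * FreeGroup.of y) 1 := by
      apply le_csInf ⟨d x y, hwit⟩
      rintro r ⟨w', v', hlen, hw, hv, rfl⟩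
      by_contra hcon
      push_neg at hcon
      have hrho0 : (0:ℝ) ≤ rho d' w' v' := foldr_max_nonneg _
      set r₀ : ℝ := d x y with hr₀
      have hr₀pos : 0 < r₀ := lt_of_le_of_lt hrho0 hcon
      have hr₀1 : r₀ ≤ 1 := le_of_lt (lt_trans hxy hε1)
      have hall : ∀ z ∈ List.zipWith d' w' v', z < r₀ :=
        fun z hz => lt_of_le_of_lt (le_foldr_max _ hz) hcon
      set q : X → Quot (fun a b : X => d a b < r₀) := Quot.mk _ with hq
      set lq : Letter X → Letter (Quot (fun a b : X => d a b < r₀)) :=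
        Option.map (Prod.map q id) with hlq
      have hmapeq : ∀ (w v : List (Letter X)), w.length = v.length →
          (∀ z ∈ List.zipWith d' w v, z < r₀) → w.map lq = v.map lq := by
        intro w
        induction w with
        | nil =>
            intro v hv _
            have hv0 : v = [] := List.length_eq_zero_iff.mp (by simpa using hv.symm)
            subst hv0
            rfl
        | cons a t ih =>
            intro v hv hz
            rcases v with _ | ⟨b, s⟩
            · simp at hv
            · have h1 : d' a b < r₀ := hz _ (List.mem_cons_self)
              have ht : t.map lq = s.map lq := ih s (by simpa using hv)
                (fun z hzz => hz z (List.mem_cons_of_mem _ hzz))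
              rw [List.map_cons, List.map_cons, ht]
              congr 1
              rcases a with _ | ⟨xa, ba⟩ <;> rcases b with _ | ⟨xb, bb⟩
              · rfl
              · exfalso
                cases bb
                · have h1' : max (d xb x₀) 1 < r₀ := h1
                  have := le_max_right (d xb x₀) (1:ℝ)
                  linarith
                · have h1' : max (d xb x₀) 1 < r₀ := h1
                  have := le_max_right (d xb x₀) (1:ℝ)
                  linarith
              · exfalso
                cases ba
                · have h1' : max (d xa x₀) 1 < r₀ := h1
                  have := le_max_right (d xa x₀) (1:ℝ)
                  linarith
                · have h1' : max (d xa x₀) 1 < r₀ := h1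
                  have := le_max_right (d xa x₀) (1:ℝ)
                  linarith
              · cases ba <;> cases bb
                · have h1' : d xa xb < r₀ := h1
                  have hqq : q xa = q xb := Quot.sound h1'
                  show some (q xa, false) = some (q xb, false)
                  rw [hqq]
                · exfalso
                  have h1' : max (max (d xa x₀) 1) (max (d xb x₀) 1) < r₀ := h1
                  have h2 : (1:ℝ) ≤ max (max (d xa x₀) 1) (max (d xb x₀) 1) :=
                    le_max_of_le_left (le_max_right _ _)
                  linarith
                · exfalso
                  have h1' : max (max (d xa x₀) 1) (max (d xb x₀) 1) < r₀ := h1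
                  have h2 : (1:ℝ) ≤ max (max (d xa x₀) 1) (max (d xb x₀) 1) :=
                    le_max_of_le_left (le_max_right _ _)
                  linarith
                · have h1' : d xa xb < r₀ := h1
                  have hqq : q xa = q xb := Quot.sound h1'
                  show some (q xa, true) = some (q xb, true)
                  rw [hqq]
      have hmaps := hmapeq w' v' hlen hall
      have h2 : FreeGroup.map q (red w') = FreeGroup.map q (red v') := by
        rw [map_red q w', map_red q v']
        exact congrArg red hmaps
      rw [hw, hv, map_one, map_mul, map_inv, FreeGroup.map.of, FreeGroup.map.of] at h2
      have h3 : q x = q y := FreeGroup.of_injective (inv_mul_eq_one.mp h2)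
      have hEquiv : Equivalence (fun a b : X => d a b < r₀) := by
        refine ⟨fun a => ?_, fun {a b} h => ?_, fun {a b c} ha hb => ?_⟩
        · rw [(hd.2.1 a a).2 rfl]; exact hr₀pos
        · rwa [hd.1]
        · exact lt_of_le_of_lt (hd.2.2 a b c) (max_lt ha hb)
      have h4 : d x y < r₀ := (hEquiv.eqvGen_iff).mp (Quot.eq.mp h3)
      exact lt_irrefl _ h4
    have heq : graev d' ((FreeGroup.of x)⁻¹ * FreeGroup.of y) 1 = d x y :=
      le_antisymm hub hlb
    exact ⟨heq, by rw [heq]; exact hxy⟩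


end GraevStmt
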